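/- arXiv:1703.04796 — 3 statements merged into one kernel-verified Lean document; each statement's English description precedes it below -/
import Mathlib

section
/- Let k = [a₁,b₁] × [a₂,b₂] ⊂ ℝ² with a₁ < b₁ and a₂ < b₂, let δ = (δ₁,δ₂) : ℝ² → ℝ² be continuously differentiable on a neighborhood of k with div δ = 0 on k, and for continuously differentiable u, v : ℝ² → ℝ define c(u,v) = ∫_k (δ · ∇u) v dx − (1/2) B(u,v), where B(u,v) = ∫_{a₂}^{b₂} [ u v δ₁ ](b₁,y) − [ u v δ₁ ](a₁,y) dy + ∫_{a₁}^{b₁} [ u v δ₂ ](x,b₂) − [ u v δ₂ ](x,a₂) dx is the boundary flux ∮_{∂k} u v (δ · n). Then c is skew-adjoint: c(u,v) = −c(v,u) for all such u, v. -/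
open MeasureTheory

/-- The local perturbation form `c(u,v) = ∫_k (δ·∇u) v − (1/2) B(u,v)`, where
`B(u,v) = ∮_{∂k} u v (δ·n)` is the boundary flux on the rectangle `k = [a₁,b₁] × [a₂,b₂]`,
is skew-adjoint: `c(u,v) = −c(v,u)` for all `C¹` functions `u, v` on a neighborhood of `k`,
provided `δ` is `C¹` and divergence-free on `k`. -/
theorem local_perturbation_form_skew_adjoint
    (a₁ b₁ a₂ b₂ : ℝ) (h1 : a₁ < b₁) (h2 : a₂ < b₂)
    (W : Set (ℝ × ℝ)) (hW : IsOpen W)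
    (hkW : Set.Icc a₁ b₁ ×ˢ Set.Icc a₂ b₂ ⊆ W)
    (δ : ℝ × ℝ → ℝ × ℝ) (hδ : ContDiffOn ℝ 1 δ W)
    (hdiv : ∀ x ∈ Set.Icc a₁ b₁ ×ˢ Set.Icc a₂ b₂,
      fderiv ℝ (fun y => (δ y).1) x (1, 0) + fderiv ℝ (fun y => (δ y).2) x (0, 1) = 0)
    (u v : ℝ × ℝ → ℝ) (hu : ContDiffOn ℝ 1 u W) (hv : ContDiffOn ℝ 1 v W) :
    (∫ x in Set.Icc a₁ b₁ ×ˢ Set.Icc a₂ b₂,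
        ((δ x).1 * fderiv ℝ u x (1, 0) + (δ x).2 * fderiv ℝ u x (0, 1)) * v x)
      - (1 / 2) *
        ((∫ y in a₂..b₂,
            (u (b₁, y) * v (b₁, y) * (δ (b₁, y)).1 - u (a₁, y) * v (a₁, y) * (δ (a₁, y)).1))
         + (∫ x in a₁..b₁,
            (u (x, b₂) * v (x, b₂) * (δ (x, b₂)).2 - u (x, a₂) * v (x, a₂) * (δ (x, a₂)).2)))
    = -((∫ x in Set.Icc a₁ b₁ ×ˢ Set.Icc a₂ b₂,
            ((δ x).1 * fderiv ℝ v x (1, 0) + (δ x).2 * fderiv ℝ v x (0, 1)) * u x)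
        - (1 / 2) *
          ((∫ y in a₂..b₂,
              (v (b₁, y) * u (b₁, y) * (δ (b₁, y)).1 - v (a₁, y) * u (a₁, y) * (δ (a₁, y)).1))
           + (∫ x in a₁..b₁,
              (v (x, b₂) * u (x, b₂) * (δ (x, b₂)).2 - v (x, a₂) * u (x, a₂) * (δ (x, a₂)).2)))) := by
  classical
  set K : Set (ℝ × ℝ) := Set.Icc a₁ b₁ ×ˢ Set.Icc a₂ b₂ with hKdef
  have hKW : K ⊆ W := hkW
  -- differentiability on W
  have hdu : ∀ x ∈ W, DifferentiableAt ℝ u x := fun x hx =>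
    (hu.differentiableOn one_ne_zero x hx).differentiableAt (hW.mem_nhds hx)
  have hdv : ∀ x ∈ W, DifferentiableAt ℝ v x := fun x hx =>
    (hv.differentiableOn one_ne_zero x hx).differentiableAt (hW.mem_nhds hx)
  have hdδ : ∀ x ∈ W, DifferentiableAt ℝ δ x := fun x hx =>
    (hδ.differentiableOn one_ne_zero x hx).differentiableAt (hW.mem_nhds hx)
  set f : ℝ × ℝ → ℝ := fun x => u x * v x * (δ x).1 with hfdef
  set g : ℝ × ℝ → ℝ := fun x => u x * v x * (δ x).2 with hgdef
  have hdf : ∀ x ∈ W, DifferentiableAt ℝ f x := fun x hx =>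
    ((hdu x hx).mul (hdv x hx)).mul (hdδ x hx).fst
  have hdg : ∀ x ∈ W, DifferentiableAt ℝ g x := fun x hx =>
    ((hdu x hx).mul (hdv x hx)).mul (hdδ x hx).snd
  have hf' : ∀ x ∈ W, ∀ w : ℝ × ℝ, fderiv ℝ f x w =
      (u x * v x) * fderiv ℝ (fun y => (δ y).1) x w +
      (δ x).1 * (u x * fderiv ℝ v x w + v x * fderiv ℝ u x w) := by
    intro x hx w
    rw [hfdef]
    rw [fderiv_fun_mul (c := fun y => u y * v y) ((hdu x hx).mul (hdv x hx)) (hdδ x hx).fst,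
      fderiv_fun_mul (hdu x hx) (hdv x hx)]
    simp only [ContinuousLinearMap.add_apply, ContinuousLinearMap.smul_apply, smul_eq_mul]
  have hg' : ∀ x ∈ W, ∀ w : ℝ × ℝ, fderiv ℝ g x w =
      (u x * v x) * fderiv ℝ (fun y => (δ y).2) x w +
      (δ x).2 * (u x * fderiv ℝ v x w + v x * fderiv ℝ u x w) := by
    intro x hx w
    rw [hgdef]
    rw [fderiv_fun_mul (c := fun y => u y * v y) ((hdu x hx).mul (hdv x hx)) (hdδ x hx).snd,
      fderiv_fun_mul (hdu x hx) (hdv x hx)]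
    simp only [ContinuousLinearMap.add_apply, ContinuousLinearMap.smul_apply, smul_eq_mul]
  have key : ∀ x ∈ K, fderiv ℝ f x (1, 0) + fderiv ℝ g x (0, 1) =
      ((δ x).1 * fderiv ℝ u x (1, 0) + (δ x).2 * fderiv ℝ u x (0, 1)) * v x +
      ((δ x).1 * fderiv ℝ v x (1, 0) + (δ x).2 * fderiv ℝ v x (0, 1)) * u x := by
    intro x hx
    have hxW := hKW hx
    rw [hf' x hxW (1, 0), hg' x hxW (0, 1)]
    have hd := hdiv x hx
    linear_combination (u x * v x) * hd
  -- continuity facts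
  have hcu : ContinuousOn u W := hu.continuousOn
  have hcv : ContinuousOn v W := hv.continuousOn
  have hcδ : ContinuousOn δ W := hδ.continuousOn
  have hcδ1 : ContinuousOn (fun x => (δ x).1) W := continuous_fst.comp_continuousOn hcδ
  have hcδ2 : ContinuousOn (fun x => (δ x).2) W := continuous_snd.comp_continuousOn hcδ
  have hfu : ContinuousOn (fun x => fderiv ℝ u x) W :=
    hu.continuousOn_fderiv_of_isOpen hW le_rfl
  have hfv : ContinuousOn (fun x => fderiv ℝ v x) W :=
    hv.continuousOn_fderiv_of_isOpen hW le_rfl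
  have hKc : IsCompact K := isCompact_Icc.prod isCompact_Icc
  have hKm : MeasurableSet K := measurableSet_Icc.prod measurableSet_Icc
  have hC1 : ContinuousOn
      (fun x => ((δ x).1 * fderiv ℝ u x (1, 0) + (δ x).2 * fderiv ℝ u x (0, 1)) * v x) W :=
    (((hcδ1.mul (hfu.clm_apply continuousOn_const)).add
      (hcδ2.mul (hfu.clm_apply continuousOn_const))).mul hcv)
  have hC2 : ContinuousOn
      (fun x => ((δ x).1 * fderiv ℝ v x (1, 0) + (δ x).2 * fderiv ℝ v x (0, 1)) * u x) W :=
    (((hcδ1.mul (hfv.clm_apply continuousOn_const)).add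
      (hcδ2.mul (hfv.clm_apply continuousOn_const))).mul hcu)
  have hInt1 : IntegrableOn
      (fun x => ((δ x).1 * fderiv ℝ u x (1, 0) + (δ x).2 * fderiv ℝ u x (0, 1)) * v x) K :=
    (hC1.mono hKW).integrableOn_compact hKc
  have hInt2 : IntegrableOn
      (fun x => ((δ x).1 * fderiv ℝ v x (1, 0) + (δ x).2 * fderiv ℝ v x (0, 1)) * u x) K :=
    (hC2.mono hKW).integrableOn_compact hKc
  have hIi : IntegrableOn (fun x => fderiv ℝ f x (1, 0) + fderiv ℝ g x (0, 1)) K :=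
    MeasureTheory.IntegrableOn.congr_fun (hInt1.add hInt2) (fun x hx => (key x hx).symm) hKm
  have hKprod : Set.Icc ((a₁, a₂) : ℝ × ℝ) (b₁, b₂) = K := (Set.Icc_prod_Icc _ _ _ _).symm
  have hle : ((a₁, a₂) : ℝ × ℝ) ≤ (b₁, b₂) := ⟨h1.le, h2.le⟩
  have hcf : ContinuousOn f W := (hcu.mul hcv).mul hcδ1
  have hcg : ContinuousOn g W := (hcu.mul hcv).mul hcδ2
  have Hdf : ∀ x ∈ Set.Ioo ((a₁, a₂) : ℝ × ℝ).1 ((b₁, b₂) : ℝ × ℝ).1 ×ˢ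
      Set.Ioo ((a₁, a₂) : ℝ × ℝ).2 ((b₁, b₂) : ℝ × ℝ).2 \ (∅ : Set (ℝ × ℝ)),
      HasFDerivAt f (fderiv ℝ f x) x := by
    intro x hx
    have hxK : x ∈ K :=
      ⟨Set.Ioo_subset_Icc_self hx.1.1, Set.Ioo_subset_Icc_self hx.1.2⟩
    exact (hdf x (hKW hxK)).hasFDerivAt
  have Hdg : ∀ x ∈ Set.Ioo ((a₁, a₂) : ℝ × ℝ).1 ((b₁, b₂) : ℝ × ℝ).1 ×ˢ
      Set.Ioo ((a₁, a₂) : ℝ × ℝ).2 ((b₁, b₂) : ℝ × ℝ).2 \ (∅ : Set (ℝ × ℝ)),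
      HasFDerivAt g (fderiv ℝ g x) x := by
    intro x hx
    have hxK : x ∈ K :=
      ⟨Set.Ioo_subset_Icc_self hx.1.1, Set.Ioo_subset_Icc_self hx.1.2⟩
    exact (hdg x (hKW hxK)).hasFDerivAt
  have hdivthm := MeasureTheory.integral_divergence_prod_Icc_of_hasFDerivAt_off_countable_of_le
    f g (fun x => fderiv ℝ f x) (fun x => fderiv ℝ g x) (a₁, a₂) (b₁, b₂) hle
    ∅ Set.countable_empty
    (by rw [hKprod]; exact hcf.mono hKW)
    (by rw [hKprod]; exact hcg.mono hKW)
    Hdf Hdg (by rw [hKprod]; exact hIi)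
  rw [hKprod] at hdivthm
  -- split the volume integral
  have hsplit : (∫ x in K, (fderiv ℝ f x (1, 0) + fderiv ℝ g x (0, 1))) =
      (∫ x in K, ((δ x).1 * fderiv ℝ u x (1, 0) + (δ x).2 * fderiv ℝ u x (0, 1)) * v x) +
      (∫ x in K, ((δ x).1 * fderiv ℝ v x (1, 0) + (δ x).2 * fderiv ℝ v x (0, 1)) * u x) := by
    rw [MeasureTheory.setIntegral_congr_fun hKm key, MeasureTheory.integral_add hInt1 hInt2]
  -- boundary integrability
  have hbd : ∀ c : ℝ, c ∈ Set.Icc a₁ b₁ →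
      IntervalIntegrable (fun y => f (c, y)) volume a₂ b₂ := by
    intro c hc
    apply ContinuousOn.intervalIntegrable
    apply hcf.comp (Continuous.continuousOn (continuous_const.prodMk continuous_id))
    intro y hy
    rw [Set.uIcc_of_le h2.le] at hy
    exact hKW ⟨hc, hy⟩
  have hbd' : ∀ c : ℝ, c ∈ Set.Icc a₂ b₂ →
      IntervalIntegrable (fun x => g (x, c)) volume a₁ b₁ := by
    intro c hc
    apply ContinuousOn.intervalIntegrable
    apply hcg.comp (Continuous.continuousOn (continuous_id.prodMk continuous_const))
    intro y hy
    rw [Set.uIcc_of_le h1.le] at hy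
    exact hKW ⟨hy, hc⟩
  have hBf : (∫ y in a₂..b₂, (f (b₁, y) - f (a₁, y))) =
      (∫ y in a₂..b₂, f (b₁, y)) - ∫ y in a₂..b₂, f (a₁, y) :=
    intervalIntegral.integral_sub (hbd b₁ (Set.right_mem_Icc.2 h1.le))
      (hbd a₁ (Set.left_mem_Icc.2 h1.le))
  have hBg : (∫ x in a₁..b₁, (g (x, b₂) - g (x, a₂))) =
      (∫ x in a₁..b₁, g (x, b₂)) - ∫ x in a₁..b₁, g (x, a₂) :=
    intervalIntegral.integral_sub (hbd' b₂ (Set.right_mem_Icc.2 h2.le))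
      (hbd' a₂ (Set.left_mem_Icc.2 h2.le))
  -- rewrite the v*u boundary integrals as u*v ones
  have hvu1 : (∫ y in a₂..b₂,
      (v (b₁, y) * u (b₁, y) * (δ (b₁, y)).1 - v (a₁, y) * u (a₁, y) * (δ (a₁, y)).1)) =
      ∫ y in a₂..b₂, (f (b₁, y) - f (a₁, y)) := by
    apply intervalIntegral.integral_congr
    intro y _
    simp only [hfdef]
    ring
  have hvu2 : (∫ x in a₁..b₁,
      (v (x, b₂) * u (x, b₂) * (δ (x, b₂)).2 - v (x, a₂) * u (x, a₂) * (δ (x, a₂)).2)) =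
      ∫ x in a₁..b₁, (g (x, b₂) - g (x, a₂)) := by
    apply intervalIntegral.integral_congr
    intro x _
    simp only [hgdef]
    ring
  have huv1 : (∫ y in a₂..b₂,
      (u (b₁, y) * v (b₁, y) * (δ (b₁, y)).1 - u (a₁, y) * v (a₁, y) * (δ (a₁, y)).1)) =
      ∫ y in a₂..b₂, (f (b₁, y) - f (a₁, y)) := rfl
  have huv2 : (∫ x in a₁..b₁,
      (u (x, b₂) * v (x, b₂) * (δ (x, b₂)).2 - u (x, a₂) * v (x, a₂) * (δ (x, a₂)).2)) =
      ∫ x in a₁..b₁, (g (x, b₂) - g (x, a₂)) := rfl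
  rw [huv1, huv2, hvu1, hvu2, hBf, hBg]
  rw [hsplit] at hdivthm
  linarith [hdivthm]
end

section
/- Let Q be a symmetric invertible real n×n matrix with Q = L Lᵀ for an invertible n×n matrix L, let B be a real p×n matrix, let α be a nonzero real number, and suppose α² B Q⁻¹ Bᵀ = R Rᵀ for an invertible p×p matrix R. Then [[−Q, αBᵀ],[αB, 0]] = 𝓛 𝒟 𝓛ᵀ, where 𝓛 = [[I, 0],[−αBQ⁻¹, I]] · [[L, 0],[0, R]] = [[L, 0],[−αBQ⁻¹L, R]] and 𝒟 = [[−I, 0],[0, I]]. -/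
open Matrix

/-- Refined block factorization `𝓜 = 𝓛 𝒟 𝓛ᵀ` of the modified mass matrix
`𝓜 = [[−Q, αBᵀ],[αB, 0]]` using Cholesky factors `Q = LLᵀ` and `α²BQ⁻¹Bᵀ = RRᵀ`, where
`𝓛 = [[I, 0],[−αBQ⁻¹, I]] · [[L, 0],[0, R]] = [[L, 0],[−αBQ⁻¹L, R]]` and
`𝒟 = [[−I, 0],[0, I]]`. -/
theorem modified_mass_matrix_LDLT_factorization
    (n p : ℕ) (Q L : Matrix (Fin n) (Fin n) ℝ)
    (hQsym : Qᵀ = Q) (hQ : IsUnit Q) (hL : IsUnit L) (hQL : Q = L * Lᵀ)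
    (B : Matrix (Fin p) (Fin n) ℝ) (α : ℝ) (hα : α ≠ 0)
    (R : Matrix (Fin p) (Fin p) ℝ) (hR : IsUnit R)
    (hRR : (α ^ 2) • (B * Q⁻¹ * Bᵀ) = R * Rᵀ) :
    Matrix.fromBlocks 1 0 (-(α • (B * Q⁻¹))) 1 * Matrix.fromBlocks L 0 0 R
        = Matrix.fromBlocks L 0 (-(α • (B * Q⁻¹ * L))) R
    ∧ Matrix.fromBlocks (-Q) (α • Bᵀ) (α • B) 0
        = (Matrix.fromBlocks L 0 (-(α • (B * Q⁻¹ * L))) R)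
          * Matrix.fromBlocks (-1) 0 0 1
          * (Matrix.fromBlocks L 0 (-(α • (B * Q⁻¹ * L))) R)ᵀ := by
  have hdet : IsUnit Q.det := (Matrix.isUnit_iff_isUnit_det Q).mp hQ
  have hQinv : Q⁻¹ᵀ = Q⁻¹ := by rw [Matrix.transpose_nonsing_inv, hQsym]
  have hQQ : Q * Q⁻¹ = 1 := Matrix.mul_nonsing_inv Q hdet
  have hQQ' : Q⁻¹ * Q = 1 := Matrix.nonsing_inv_mul Q hdet
  constructor
  · rw [Matrix.fromBlocks_multiply]
    congr 1 <;> simp [Matrix.mul_smul, Matrix.smul_mul, mul_assoc]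
  · rw [Matrix.fromBlocks_transpose, Matrix.fromBlocks_multiply, Matrix.fromBlocks_multiply,
      Matrix.fromBlocks_inj]
    refine ⟨?_, ?_, ?_, ?_⟩
    · simp [hQL]
    · simp only [Matrix.neg_mul, Matrix.mul_neg, Matrix.zero_mul, Matrix.mul_zero,
        Matrix.one_mul, Matrix.mul_one, add_zero, zero_add, neg_neg, Matrix.transpose_neg,
        Matrix.transpose_smul, Matrix.transpose_mul, hQinv, Matrix.mul_smul,
        smul_neg, neg_neg]
      congr 1
      rw [← Matrix.mul_assoc L Lᵀ, ← hQL, ← Matrix.mul_assoc, hQQ, Matrix.one_mul]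
    · simp only [Matrix.neg_mul, Matrix.mul_neg, Matrix.zero_mul, Matrix.mul_zero,
        Matrix.one_mul, Matrix.mul_one, add_zero, zero_add, neg_neg,
        Matrix.transpose_zero, Matrix.smul_mul]
      congr 1
      rw [Matrix.mul_assoc (B * Q⁻¹) L Lᵀ, ← hQL, Matrix.mul_assoc, hQQ', Matrix.mul_one]
    · simp only [Matrix.neg_mul, Matrix.mul_neg, Matrix.zero_mul, Matrix.mul_zero,
        Matrix.one_mul, Matrix.mul_one, add_zero, zero_add, neg_neg,
        Matrix.transpose_neg, Matrix.transpose_smul, Matrix.transpose_mul, hQinv,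
        Matrix.smul_mul, Matrix.mul_smul, smul_smul, ← sq]
      have h1 : B * Q⁻¹ * L * (Lᵀ * (Q⁻¹ * Bᵀ)) = B * Q⁻¹ * Bᵀ := by
        rw [← Matrix.mul_assoc (B * Q⁻¹ * L) Lᵀ, Matrix.mul_assoc (B * Q⁻¹) L Lᵀ, ← hQL,
          Matrix.mul_assoc B Q⁻¹ Q, hQQ', Matrix.mul_one, ← Matrix.mul_assoc B Q⁻¹ Bᵀ]
      rw [h1, hRR]
      abel
end

section
/- Let F and Q be real n×n matrices, B a real p×n matrix, α a real number, and λ ∈ ℂ with λα ≠ 1 (matrices are regarded as complex matrices). Then there exists a nonzero pair (u, p) ∈ ℂⁿ × ℂᵖ with F u + Bᵀ p = −λ Q u and B u = 0 if and only if there exists a nonzero pair (u', p') ∈ ℂⁿ × ℂᵖ with F u' + Bᵀ p' = λ ( −Q u' + α Bᵀ p' ) and B u' = λ α B u'; that is, every λ ≠ 1/α is an eigenvalue of the pencil ([[F, Bᵀ],[B, 0]], [[−Q, 0],[0, 0]]) restricted to finite eigenvalues if and only if it is an eigenvalue of the modified pencil ([[F, Bᵀ],[B, 0]], [[−Q, αBᵀ],[αB,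 0]]). -/
open Matrix

/-- For `λα ≠ 1`, `λ` is a (finite) eigenvalue of the pencil
`([[F, Bᵀ],[B, 0]], [[−Q, 0],[0, 0]])`, i.e. `Fu + Bᵀp = −λQu` and `Bu = 0` for some
nonzero `(u, p)`, if and only if it is an eigenvalue of the modified pencil
`([[F, Bᵀ],[B, 0]], [[−Q, αBᵀ],[αB, 0]])`, i.e. `Fu' + Bᵀp' = λ(−Qu' + αBᵀp')` and
`Bu' = λαBu'` for some nonzero `(u', p')`. -/
theorem modified_pencil_same_finite_eigenvalues
    (n p : ℕ) (F Q : Matrix (Fin n) (Fin n) ℝ) (B : Matrix (Fin p) (Fin n) ℝ)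
    (α : ℝ) (lam : ℂ) (h : lam * (α : ℂ) ≠ 1) :
    (∃ (u : Fin n → ℂ) (q : Fin p → ℂ), (u, q) ≠ 0 ∧
        (F.map Complex.ofReal).mulVec u + ((Bᵀ).map Complex.ofReal).mulVec q
          = (-lam) • (Q.map Complex.ofReal).mulVec u ∧
        (B.map Complex.ofReal).mulVec u = 0)
    ↔ (∃ (u' : Fin n → ℂ) (q' : Fin p → ℂ), (u', q') ≠ 0 ∧
        (F.map Complex.ofReal).mulVec u' + ((Bᵀ).map Complex.ofReal).mulVec q'
          = lam • (-(Q.map Complex.ofReal).mulVec u'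
              + (α : ℂ) • ((Bᵀ).map Complex.ofReal).mulVec q') ∧
        (B.map Complex.ofReal).mulVec u' = lam • ((α : ℂ) • (B.map Complex.ofReal).mulVec u')) := by
  have hc : (1 - lam * (α : ℂ)) ≠ 0 := sub_ne_zero.mpr (Ne.symm h)
  constructor
  · rintro ⟨u, q, hne, h1, h2⟩
    refine ⟨u, (1 - lam * (α : ℂ))⁻¹ • q, ?_, ?_, ?_⟩
    · intro hz
      apply hne
      have hu : u = 0 := congrArg Prod.fst hz
      have hq : (1 - lam * (α : ℂ))⁻¹ • q = 0 := congrArg Prod.snd hz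
      have : q = 0 := by
        have := smul_eq_zero.mp hq
        rcases this with h' | h'
        · exact absurd h' (inv_ne_zero hc)
        · exact h'
      simp [hu, this, Prod.ext_iff]
    · rw [mulVec_smul]
      funext i
      have h1i := congrFun h1 i
      simp only [Pi.add_apply, Pi.smul_apply, Pi.neg_apply, smul_eq_mul] at h1i ⊢
      field_simp
      linear_combination (1 - lam * (α : ℂ)) * h1i
    · rw [h2]
      simp
  · rintro ⟨u, q, hne, h1, h2⟩
    have hBu : (B.map Complex.ofReal).mulVec u = 0 := by
      funext i
      have h2i := congrFun h2 i
      simp only [Pi.smul_apply, smul_eq_mul, Pi.zero_apply] at h2i ⊢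
      have : (1 - lam * (α : ℂ)) * (B.map Complex.ofReal).mulVec u i = 0 := by
        linear_combination h2i
      exact (mul_eq_zero.mp this).resolve_left hc
    refine ⟨u, (1 - lam * (α : ℂ)) • q, ?_, ?_, hBu⟩
    · intro hz
      apply hne
      have hu : u = 0 := congrArg Prod.fst hz
      have hq : (1 - lam * (α : ℂ)) • q = 0 := congrArg Prod.snd hz
      have : q = 0 := (smul_eq_zero.mp hq).resolve_left hc
      simp [hu, this, Prod.ext_iff]
    · rw [mulVec_smul]
      funext i
      have h1i := congrFun h1 i
      simp only [Pi.add_apply, Pi.smul_apply, Pi.neg_apply, smul_eq_mul] at h1i ⊢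
      linear_combination h1i
end
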